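/- arXiv:2503.23787 — 4 statements merged into one kernel-verified Lean document; each statement's English description precedes it below -/
import Mathlib

section
/- Let d ≥ 1 and let δ : Z/(2d) → Z/2 satisfy δ(j) = δ(j + d) + 1 for all j, and suppose δ(j₀) ≠ δ(j₀ + d/k) + 1 for some j₀, for every divisor k ≥ 2 of d. Then δ ∘ c^m ≠ δ for every 1 ≤ m ≤ 2d − 1, i.e., δ has trivial stabilizer under the cyclic shift group Z/(2d). -/
private lemma per_int {n : ℕ} (δ : ZMod n → ZMod 2) (x : ZMod n)
    (hx : ∀ j, δ (j + x) = δ j) :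
    ∀ t : ℤ, ∀ j, δ (j + (t : ZMod n) * x) = δ j := by
  intro t
  induction t using Int.induction_on with
  | zero => simp
  | succ t ih =>
    intro j
    have : j + ((t : ℤ) + 1 : ℤ) * x = (j + (t : ℤ) * x) + x := by push_cast; ring
    rw [this, hx, ih]
  | pred t ih =>
    intro j
    have : (j + (-(t : ℤ) - 1 : ℤ) * x) + x = j + (-(t : ℤ) : ℤ) * x := by push_cast; ring
    have h2 := hx (j + (-(t : ℤ) - 1 : ℤ) * x)
    rw [this, ih] at h2
    rw [← h2]

/-- If `δ : ℤ/2d → ℤ/2` is `d`-antiperiodic and for every divisor `k ≥ 2` of `d` it is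
not `d/k`-antiperiodic, then `δ` has trivial stabilizer under the cyclic shift group. -/
theorem stmt4 (d : ℕ) (hd : 1 ≤ d)
    (δ : ZMod (2 * d) → ZMod 2)
    (h1 : ∀ j : ZMod (2 * d), δ j = δ (j + (d : ZMod (2 * d))) + 1)
    (h2 : ∀ k : ℕ, 2 ≤ k → k ∣ d →
      ∃ j : ZMod (2 * d), δ j ≠ δ (j + ((d / k : ℕ) : ZMod (2 * d))) + 1) :
    ∀ m : ℕ, 1 ≤ m → m ≤ 2 * d - 1 →
      ∃ j : ZMod (2 * d), δ (j + (m : ZMod (2 * d))) ≠ δ j := by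
  intro m hm1 hm2
  by_contra hcon
  push_neg at hcon
  -- hcon : ∀ j, δ (j + m) = δ j
  set g : ℕ := Nat.gcd m (2 * d) with hg
  have hgm : g ∣ m := Nat.gcd_dvd_left _ _
  have hg2d : g ∣ 2 * d := Nat.gcd_dvd_right _ _
  -- g is a period
  have hcast : ((g : ℕ) : ZMod (2 * d)) =
      ((Nat.gcdA m (2 * d) : ℤ) : ZMod (2 * d)) * (m : ZMod (2 * d)) := by
    have hb := Nat.gcd_eq_gcd_ab m (2 * d)
    have : ((g : ℕ) : ZMod (2 * d)) = (((g : ℕ) : ℤ) : ZMod (2 * d)) := by push_cast; ring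
    rw [this, hb]
    have hz : (2 : ZMod (2 * d)) * (d : ZMod (2 * d)) = 0 := by
      have h0 := ZMod.natCast_self (2 * d)
      push_cast at h0
      linear_combination h0
    push_cast
    linear_combination ((Nat.gcdB m (2 * d) : ℤ) : ZMod (2 * d)) * hz
  have hper : ∀ j : ZMod (2 * d), δ (j + (g : ZMod (2 * d))) = δ j := by
    intro j
    rw [hcast]
    exact per_int δ (m : ZMod (2 * d)) hcon _ j
  have hone : (1 : ZMod 2) ≠ 0 := one_ne_zero
  -- g does not divide d
  have hnd : ¬ g ∣ d := by
    rintro ⟨s, hs⟩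
    have hdz : δ (0 + (d : ZMod (2 * d))) = δ 0 := by
      have : ((d : ℕ) : ZMod (2 * d)) = ((s : ℤ) : ZMod (2 * d)) * (g : ZMod (2 * d)) := by
        rw [hs]; push_cast; ring
      rw [this]
      exact per_int δ (g : ZMod (2 * d)) hper _ 0
    have := h1 0
    rw [hdz] at this
    exact hone (left_eq_add.mp this)
  -- g is even
  have h2g : 2 ∣ g := by
    by_contra h2g
    have hcop : Nat.Coprime g 2 := by
      rw [Nat.coprime_comm]
      exact (Nat.Prime.coprime_iff_not_dvd Nat.prime_two).mpr h2g
    exact hnd (hcop.dvd_of_dvd_mul_left hg2d)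
  obtain ⟨e, he⟩ := h2g
  have hed : e ∣ d := by
    have : 2 * e ∣ 2 * d := he ▸ hg2d
    exact (mul_dvd_mul_iff_left (two_ne_zero)).mp this
  have hgne : g ≠ 0 := by
    intro h0
    have := Nat.eq_zero_of_gcd_eq_zero_left h0
    omega
  have he1 : 1 ≤ e := by omega
  obtain ⟨k, hdk⟩ := hed
  have hkd : k ∣ d := ⟨e, by rw [hdk]; ring⟩
  have hgle : g ≤ m := Nat.le_of_dvd (by omega) hgm
  have hk2 : 2 ≤ k := by
    rcases Nat.lt_or_ge k 2 with h | h
    · interval_cases k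
      · omega
      · omega
    · exact h
  have hkodd : ¬ 2 ∣ k := by
    rintro ⟨t, ht⟩
    exact hnd ⟨t, by rw [hdk, ht, he]; ring⟩
  obtain ⟨t, ht⟩ : ∃ t, k = 2 * t + 1 := ⟨k / 2, by omega⟩
  -- δ is e-antiperiodic
  have hanti : ∀ j : ZMod (2 * d), δ j = δ (j + (e : ZMod (2 * d))) + 1 := by
    intro j
    have hde : δ (j + (d : ZMod (2 * d))) = δ (j + (e : ZMod (2 * d))) := by
      have hds : ((d : ℕ) : ZMod (2 * d)) =
          (e : ZMod (2 * d)) + ((t : ℤ) : ZMod (2 * d)) * (g : ZMod (2 * d)) := by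
        rw [hdk, ht, he]; push_cast; ring
      rw [hds, ← add_assoc]
      exact per_int δ (g : ZMod (2 * d)) hper _ _
    rw [← hde]; exact h1 j
  obtain ⟨j₀, hj₀⟩ := h2 k hk2 hkd
  have hkpos : 0 < k := by omega
  have hek : d / k = e := by rw [hdk, Nat.mul_div_assoc e (dvd_refl k), Nat.div_self hkpos, Nat.mul_one]
  rw [hek] at hj₀
  exact hj₀ (hanti j₀)
end

section
/- Let d = 2^{k₀} p₁^{k₁} ⋯ p_m^{k_m} with p₁, …, p_m distinct odd primes. Let A₀ be the set of functions δ : Z/(2d) → Z/2 such that δ(j) = δ(j+d)+1 for all j, and for every divisor k ≥ 2 of d there exists j with δ(j) ≠ δ(j + d/k) + 1. Then |A₀| = 2^d + Σ_{j=1}^{m} Σ_{1 ≤ i₁ < ⋯ < i_j ≤ m} (−1)^j · 2^{d/(p_{i₁} ⋯ p_{i_j})}. -/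
/-- `δ : ZMod (2d) → ZMod 2` is `e`-antiperiodic. -/
def myAP (d e : ℕ) (δ : ZMod (2*d) → ZMod 2) : Prop :=
  ∀ j : ZMod (2*d), δ (j + (e : ZMod (2*d))) = δ j + 1

lemma myAP_nsmul {d e : ℕ} {δ : ZMod (2*d) → ZMod 2} (h : myAP d e δ) :
    ∀ (a : ℕ) (j : ZMod (2*d)), δ (j + (a : ZMod (2*d)) * e) = δ j + a := by
  intro a
  induction a with
  | zero => simp
  | succ a ih =>
    intro j
    have := h (j + (a : ZMod (2*d)) * e)
    push_cast
    push_cast at this ih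
    rw [show j + ((a : ZMod (2*d)) + 1) * e = j + (a:ZMod (2*d)) * e + e by ring, this, ih]
    ring

lemma myAP_zsmul {d e : ℕ} {δ : ZMod (2*d) → ZMod 2} (h : myAP d e δ) :
    ∀ (a : ℤ) (j : ZMod (2*d)), δ (j + (a : ZMod (2*d)) * e) = δ j + a := by
  intro a
  induction a using Int.induction_on with
  | zero => simp
  | succ a ih =>
    intro j
    have := h (j + (a : ZMod (2*d)) * e)
    push_cast at this ih ⊢
    rw [show j + ((a : ZMod (2*d)) + 1) * e = j + (a:ZMod (2*d)) * e + e by ring, this, ih]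
    ring
  | pred a ih =>
    intro j
    have := h (j + (-(a:ZMod (2*d)) - 1) * e)
    push_cast at this ih ⊢
    rw [show j + (-(a : ZMod (2*d)) - 1) * e + e = j + -(a:ZMod (2*d)) * e by ring, ih] at this
    have h2 : δ (j + (-(a:ZMod (2*d)) - 1) * e) = δ j + -(a:ZMod 2) - 1 := by
      rw [eq_sub_iff_add_eq, ← this]
    rw [h2]; ring

lemma odd_cast_zmod2 {c : ℕ} (hc : Odd c) : (c : ZMod 2) = 1 := by
  obtain ⟨t, rfl⟩ := hc
  push_cast
  rw [show ((2:ZMod 2)) = ((2:ℕ) : ZMod 2) by push_cast; ring, ZMod.natCast_self]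
  ring

lemma myAP_mul {d e c : ℕ} {δ : ZMod (2*d) → ZMod 2} (h : myAP d e δ) (hc : Odd c) :
    myAP d (c * e) δ := by
  intro j
  have := myAP_nsmul h c j
  push_cast at this ⊢
  rw [this, odd_cast_zmod2 hc]

/-- if `δ` is `d/K`-antiperiodic, `kk ∣ K ∣ d` and `K/kk` odd then `δ` is `d/kk`-antiperiodic -/
lemma myAP_of_div {d K kk : ℕ} {δ : ZMod (2*d) → ZMod 2} (h : myAP d (d / K) δ)
    (h1 : kk ∣ K) (h2 : K ∣ d) (h3 : Odd (K / kk)) (hd : 0 < d) : myAP d (d / kk) δ := by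
  obtain ⟨s, rfl⟩ := h1
  obtain ⟨t, rfl⟩ := h2
  have hkk : 0 < kk := by
    rcases Nat.eq_zero_or_pos kk with h | h
    · subst h; simp at hd
    · exact h
  have hs : 0 < s := by
    rcases Nat.eq_zero_or_pos s with h | h
    · subst h; simp at hd
    · exact h
  have hdk : kk * s * t / (kk * s) = t := by rw [Nat.mul_div_cancel_left]; positivity
  have hdkk : kk * s * t / kk = s * t := by rw [mul_assoc, Nat.mul_div_cancel_left]; positivity
  have hsodd : Odd s := by rwa [Nat.mul_div_cancel_left _ hkk] at h3
  have := myAP_mul (c := s) (by rwa [hdk] at h) hsodd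
  rwa [hdkk]

/-- even case is impossible -/
lemma myAP_even_false {d kk : ℕ} {δ : ZMod (2*d) → ZMod 2} (hap : myAP d d δ)
    (h : myAP d (d / kk) δ) (h2 : kk ∣ d) (heven : Even kk) (hkk : 2 ≤ kk) (hd : 0 < d) : False := by
  have := myAP_nsmul h kk 0
  rw [zero_add, ← Nat.cast_mul, Nat.mul_div_cancel' h2] at this
  have h4 : ((kk:ℕ) : ZMod 2) = 0 := by
    obtain ⟨t, rfl⟩ := heven
    have h2' : ((2:ℕ) : ZMod 2) = 0 := ZMod.natCast_self 2
    push_cast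
    push_cast at h2'
    rw [show ((t:ZMod 2) + t) = 2 * t by ring, h2', zero_mul]
  rw [h4, add_zero] at this
  have hcontr := hap 0
  rw [zero_add, this] at hcontr
  exact one_ne_zero (by linear_combination hcontr.symm : (1 : ZMod 2) = 0)

lemma odd_cast_zmod2' {c : ℤ} (hc : Odd c) : (c : ZMod 2) = 1 := by
  obtain ⟨t, rfl⟩ := hc
  push_cast
  rw [show ((2:ZMod 2)) = ((2:ℕ) : ZMod 2) by push_cast; ring, ZMod.natCast_self]
  ring

/-- Bezout combination: `k₁, k₂` odd coprime, `k₁ * k₂ ∣ d`. -/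
lemma myAP_combine {d k₁ k₂ : ℕ} {δ : ZMod (2*d) → ZMod 2}
    (h₁ : myAP d (d / k₁) δ) (h₂ : myAP d (d / k₂) δ)
    (hco : Nat.Coprime k₁ k₂) (ho₁ : Odd k₁) (ho₂ : Odd k₂)
    (hdvd : k₁ * k₂ ∣ d) : myAP d (d / (k₁ * k₂)) δ := by
  obtain ⟨t, ht⟩ := hdvd
  have hk₁ : 0 < k₁ := ho₁.pos
  have hk₂ : 0 < k₂ := ho₂.pos
  have e₁ : d / k₁ = k₂ * t := by rw [ht, mul_assoc, Nat.mul_div_cancel_left _ hk₁]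
  have e₂ : d / k₂ = k₁ * t := by
    rw [ht, show k₁ * k₂ * t = k₂ * (k₁ * t) by ring, Nat.mul_div_cancel_left _ hk₂]
  have e₃ : d / (k₁ * k₂) = t := by rw [ht, Nat.mul_div_cancel_left _ (by positivity)]
  -- Bezout
  have hbez : ∃ a b : ℤ, a * k₁ + b * k₂ = 1 := by
    have := Nat.Coprime.gcd_eq_one hco
    obtain ⟨a, b, hab⟩ := (Nat.isCoprime_iff_coprime.mpr hco)
    exact ⟨a, b, by linarith [hab]⟩
  obtain ⟨a, b, hab⟩ := hbez
  intro j
  have step1 := myAP_zsmul h₂ a j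
  have step2 := myAP_zsmul h₁ b (j + (a : ZMod (2*d)) * ((d / k₂ : ℕ) : ZMod (2*d)))
  rw [step1] at step2
  have harg : j + (a : ZMod (2*d)) * ((d / k₂ : ℕ) : ZMod (2*d))
      + (b : ZMod (2*d)) * ((d / k₁ : ℕ) : ZMod (2*d))
      = j + ((d / (k₁ * k₂) : ℕ) : ZMod (2*d)) := by
    rw [e₁, e₂, e₃]
    push_cast
    have : ((a : ZMod (2*d)) * k₁ + (b : ZMod (2*d)) * k₂) = 1 := by
      have := congrArg (fun z : ℤ => (z : ZMod (2*d))) hab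
      push_cast at this
      exact this
    linear_combination (t : ZMod (2*d)) * this
  rw [harg] at step2
  rw [step2]
  have hsum : ((a : ZMod 2) + b) = 1 := by
    have h1 : ((a * k₁ + b * k₂ : ℤ) : ZMod 2) = 1 := by rw [hab]; push_cast; ring
    push_cast at h1
    rw [odd_cast_zmod2 ho₁, odd_cast_zmod2 ho₂] at h1
    linear_combination h1
  linear_combination hsum

lemma myAP_card {d e : ℕ} (hd : 0 < d) (he : e ∣ d) :
    Nat.card {δ : ZMod (2*d) → ZMod 2 // myAP d e δ} = 2 ^ e := by
  haveI : NeZero (2*d) := ⟨by omega⟩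
  have he0 : 0 < e := Nat.pos_of_dvd_of_pos he hd
  have hen : e < 2*d := by
    have := Nat.le_of_dvd hd he
    omega
  obtain ⟨s, hs⟩ := he
  -- the inverse construction
  set g : (Fin e → ZMod 2) → ZMod (2*d) → ZMod 2 :=
    fun f x => f ⟨x.val % e, Nat.mod_lt _ he0⟩ + ((x.val / e : ℕ) : ZMod 2) with hg
  have even2 : ((2 * s : ℕ) : ZMod 2) = 0 := by
    rw [show ((2 * s : ℕ) : ZMod 2) = ((2:ℕ) : ZMod 2) * s by push_cast; ring,
      ZMod.natCast_self, zero_mul]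
  have hval : ∀ x : ZMod (2*d), (x + (e : ZMod (2*d))).val = (x.val + e) % (2*d) := by
    intro x
    rw [ZMod.val_add, ZMod.val_natCast, Nat.mod_eq_of_lt hen]
  have hgap : ∀ f, myAP d e (g f) := by
    intro f x
    have hx : x.val < 2*d := ZMod.val_lt x
    rw [hg]
    simp only
    rw [hval x]
    have h2d : 2*d = e * (2*s) := by rw [hs]; ring
    have hs1 : 1 ≤ s := by
      rcases Nat.eq_zero_or_pos s with h | h
      · subst h; simp [hs] at hd
      · exact h
    rcases lt_or_ge (x.val + e) (2*d) with hlt | hge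
    · rw [Nat.mod_eq_of_lt hlt]
      have h1 : (x.val + e) % e = x.val % e := Nat.add_mod_right _ _
      have h2 : (x.val + e) / e = x.val / e + 1 := Nat.add_div_right _ he0
      have hfin : (⟨(x.val + e) % e, Nat.mod_lt _ he0⟩ : Fin e)
          = ⟨x.val % e, Nat.mod_lt _ he0⟩ := Fin.ext h1
      rw [h2, hfin]
      push_cast
      ring
    · -- wraparound case
      have hmod : (x.val + e) % (2*d) = x.val + e - 2*d := by
        rw [Nat.mod_eq_sub_mod hge, Nat.mod_eq_of_lt (by omega)]
      rw [hmod]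
      -- write v = e*q + r
      set v := x.val with hv
      have hq' : 2*s ≤ v / e + 1 := by
        have key1 : e * (2*s - 1) + e = e * (2*s) := by
          rw [← Nat.mul_succ]; congr 1; omega
        have hle : e * (2*s - 1) ≤ v := by omega
        have := (Nat.le_div_iff_mul_le he0).mpr
          (by rw [mul_comm]; exact hle : (2*s-1) * e ≤ v)
        omega
      have hmd := Nat.mod_add_div v e
      have hexp : e * (v / e + 1 - 2*s) = e*(v/e) + e - e*(2*s) := by
        rw [Nat.mul_sub, Nat.mul_add, mul_one]
      have hAB : e*(2*s) ≤ e*(v/e) + e := by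
        have := Nat.mul_le_mul_left e hq'
        rw [Nat.mul_add, mul_one] at this
        omega
      have hsub : v + e - 2*d = (v % e) + e * (v / e + 1 - 2*s) := by omega
      rw [hsub]
      have h1 : ((v % e) + e * (v / e + 1 - 2*s)) % e = v % e := by
        rw [Nat.add_mul_mod_self_left, Nat.mod_eq_of_lt (Nat.mod_lt _ he0)]
      have h2 : ((v % e) + e * (v / e + 1 - 2*s)) / e = v / e + 1 - 2*s := by
        rw [Nat.add_mul_div_left _ _ he0, Nat.div_eq_of_lt (Nat.mod_lt _ he0), zero_add]
      have hfin : (⟨((v % e) + e * (v / e + 1 - 2*s)) % e, Nat.mod_lt _ he0⟩ : Fin e)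
          = ⟨v % e, Nat.mod_lt _ he0⟩ := Fin.ext h1
      rw [hfin, h2]
      have h3 : ((v / e + 1 - 2*s : ℕ) : ZMod 2) = ((v/e : ℕ) : ZMod 2) + 1 := by
        rw [Nat.cast_sub hq', even2]
        push_cast
        ring
      rw [h3]
      ring
  -- the equivalence
  have key : ∀ (δ : ZMod (2*d) → ZMod 2), myAP d e δ → ∀ x : ZMod (2*d),
      δ x = δ ((x.val % e : ℕ) : ZMod (2*d)) + ((x.val / e : ℕ) : ZMod 2) := by
    intro δ hδ x
    have this1 := myAP_nsmul hδ (x.val / e) ((x.val % e : ℕ) : ZMod (2*d))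
    have harg : ((x.val % e : ℕ) : ZMod (2*d)) + ((x.val / e : ℕ) : ZMod (2*d)) * (e : ZMod (2*d)) = x := by
      rw [← Nat.cast_mul, ← Nat.cast_add]
      rw [Nat.mod_add_div' x.val e]
      simp [ZMod.natCast_val, ZMod.cast_id]
    rw [harg] at this1
    rw [this1]
  let E : {δ : ZMod (2*d) → ZMod 2 // myAP d e δ} ≃ (Fin e → ZMod 2) :=
    { toFun := fun δ r => δ.1 ((r.val : ℕ) : ZMod (2*d))
      invFun := fun f => ⟨g f, hgap f⟩
      left_inv := by
        intro ⟨δ, hδ⟩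
        ext x
        simp only [hg]
        rw [key δ hδ x]
      right_inv := by
        intro f
        ext r
        simp only [hg]
        have hr : ((r.val : ℕ) : ZMod (2*d)).val = r.val := by
          rw [ZMod.val_natCast, Nat.mod_eq_of_lt (by omega : r.val < 2*d)]
        rw [hr]
        have h1 : r.val % e = r.val := Nat.mod_eq_of_lt r.isLt
        have h2 : r.val / e = 0 := Nat.div_eq_of_lt r.isLt
        rw [h2]
        push_cast
        rw [add_zero]
        congr 1
        exact Fin.ext h1 }
  rw [Nat.card_congr E]
  simp [Nat.card_eq_fintype_card]

lemma odd_div {K kk : ℕ} (hK : Odd K) (h : kk ∣ K) : Odd (K / kk) := by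
  have := Nat.div_mul_cancel h
  rw [← this] at hK
  exact (Nat.odd_mul.mp hK).1

lemma zmod2_flip' : ∀ (a b : ZMod 2), a = b + 1 ↔ b = a + 1 := by decide
lemma zmod2_flip {a b : ZMod 2} : a = b + 1 ↔ b = a + 1 := zmod2_flip' a b

lemma mem_inf_finset {ι α : Type*} [Fintype α] [DecidableEq α] {x : α} {t : Finset ι}
    {B : ι → Finset α} : x ∈ t.inf B ↔ ∀ i ∈ t, x ∈ B i := by
  classical
  induction t using Finset.induction with
  | empty => simp [Finset.inf_empty, Finset.top_eq_univ]
  | insert _ _ h ih => simp [Finset.inf_insert, Finset.inf_eq_inter, ih, Finset.mem_inter]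

/-- Inclusion–exclusion count: for `d = 2^{k₀} p₁^{k₁} ⋯ p_m^{k_m}` with distinct odd
primes `p_i`, the number of `d`-antiperiodic `δ : ℤ/2d → ℤ/2` which are not
`(d/k)`-antiperiodic for any divisor `k ≥ 2` of `d` equals
`2^d + Σ_{∅ ≠ S ⊆ {1,…,m}} (−1)^{|S|} 2^{d/∏_{i∈S} p_i}`. -/
theorem stmt5 (m k₀ : ℕ) (p : Fin m → ℕ) (k : Fin m → ℕ)
    (hp : ∀ i, (p i).Prime) (hodd : ∀ i, Odd (p i)) (hinj : Function.Injective p)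
    (hk : ∀ i, 1 ≤ k i)
    (d : ℕ) (hd : d = 2 ^ k₀ * ∏ i, p i ^ k i)
    (A₀ : Set (ZMod (2 * d) → ZMod 2))
    (hA₀ : A₀ = {δ | (∀ j : ZMod (2 * d), δ j = δ (j + (d : ZMod (2 * d))) + 1) ∧
      ∀ kk : ℕ, 2 ≤ kk → kk ∣ d →
        ∃ j : ZMod (2 * d), δ j ≠ δ (j + ((d / kk : ℕ) : ZMod (2 * d))) + 1}) :
    (Nat.card A₀ : ℤ) =
      2 ^ d + ∑ S ∈ Finset.univ.powerset.filter Finset.Nonempty,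
        (-1 : ℤ) ^ S.card * 2 ^ (d / ∏ i ∈ S, p i) := by
  classical
  subst hA₀
  have hd0 : 0 < d := by
    rw [hd]
    have h1 : 0 < ∏ i, p i ^ k i := Finset.prod_pos fun i _ => pow_pos (hp i).pos _
    positivity
  haveI : NeZero (2*d) := ⟨by omega⟩
  -- products over subsets
  have hPodd : ∀ t : Finset (Fin m), Odd (∏ i ∈ t, p i) := by
    intro t
    refine Finset.prod_induction p Odd (fun a b ha hb => ha.mul hb) odd_one ?_
    exact fun i _ => hodd i
  have hPdvd : ∀ t : Finset (Fin m), (∏ i ∈ t, p i) ∣ d := by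
    intro t
    rw [hd]
    refine Dvd.dvd.mul_left ?_ _
    calc (∏ i ∈ t, p i) ∣ ∏ i ∈ t, p i ^ k i :=
          Finset.prod_dvd_prod_of_dvd _ _ fun i _ =>
            dvd_pow_self (p i) (by have := hk i; omega)
      _ ∣ ∏ i, p i ^ k i := Finset.prod_dvd_prod_of_subset _ _ _ (Finset.subset_univ t)
  -- characterization of t-fold intersections
  have hchar : ∀ (t : Finset (Fin m)) (δ : ZMod (2*d) → ZMod 2),
      (myAP d d δ ∧ ∀ i ∈ t, myAP d (d / p i) δ) ↔ myAP d (d / ∏ i ∈ t, p i) δ := by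
    intro t δ
    constructor
    · rintro ⟨hdd, hall⟩
      induction t using Finset.induction with
      | empty => simpa using hdd
      | @insert a t' ha ih =>
        rw [Finset.prod_insert ha]
        have hco : Nat.Coprime (p a) (∏ i ∈ t', p i) := by
          refine Nat.Coprime.prod_right fun i hi => ?_
          exact (Nat.coprime_primes (hp a) (hp i)).mpr
            (fun heq => ha (hinj heq ▸ hi))
        refine myAP_combine (hall a (Finset.mem_insert_self a t'))
          (ih (fun i hi => hall i (Finset.mem_insert_of_mem hi))) hco (hodd a) (hPodd t') ?_
        rw [← Finset.prod_insert ha]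
        exact hPdvd _
    · intro h
      constructor
      · have := myAP_of_div h (one_dvd _) (hPdvd t) (by rw [Nat.div_one]; exact hPodd t) hd0
        rwa [Nat.div_one] at this
      · intro i hi
        exact myAP_of_div h (Finset.dvd_prod_of_mem p hi) (hPdvd t)
          (odd_div (hPodd t) (Finset.dvd_prod_of_mem p hi)) hd0
  -- rewrite A₀
  have hset : {δ : ZMod (2*d) → ZMod 2 | (∀ j : ZMod (2 * d), δ j = δ (j + (d : ZMod (2 * d))) + 1) ∧
      ∀ kk : ℕ, 2 ≤ kk → kk ∣ d →
        ∃ j : ZMod (2 * d), δ j ≠ δ (j + ((d / kk : ℕ) : ZMod (2 * d))) + 1}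
      = {δ | myAP d d δ ∧ ∀ i, ¬ myAP d (d / p i) δ} := by
    ext δ
    simp only [Set.mem_setOf_eq]
    have hfirst : (∀ j : ZMod (2 * d), δ j = δ (j + (d : ZMod (2 * d))) + 1) ↔ myAP d d δ :=
      forall_congr' fun j => zmod2_flip
    rw [hfirst]
    refine and_congr_right fun h1 => ?_
    constructor
    · intro h i hap
      obtain ⟨j, hj⟩ := h (p i) (hp i).two_le (dvd_trans (Finset.dvd_prod_of_mem p (Finset.mem_univ i)) (hPdvd Finset.univ))
      exact hj (zmod2_flip.mp (hap j))
    · intro h kk h2 hdvd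
      by_contra hno
      push_neg at hno
      have hap : myAP d (d / kk) δ := fun j => zmod2_flip.mp (hno j)
      rcases Nat.even_or_odd kk with heven | hkodd
      · exact myAP_even_false h1 hap hdvd heven h2 hd0
      · -- kk odd, take its least prime factor
        set q := kk.minFac with hq
        have hqp : q.Prime := Nat.minFac_prime (by omega)
        have hqdvd : q ∣ kk := Nat.minFac_dvd kk
        have hqodd : Odd q := by
          rcases Nat.even_or_odd q with he | ho
          · exfalso
            have : (2:ℕ) ∣ q := even_iff_two_dvd.mp he
            have : (2:ℕ) ∣ kk := this.trans hqdvd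
            rw [Nat.odd_iff] at hkodd; omega
          · exact ho
        -- q = p i for some i
        have hqd : q ∣ d := hqdvd.trans hdvd
        have : ∃ i, q = p i := by
          rw [hd] at hqd
          rcases (Nat.Prime.dvd_mul hqp).mp hqd with h2pow | hprod
          · exfalso
            have := Nat.Prime.dvd_of_dvd_pow hqp h2pow
            have : q = 2 := (Nat.prime_dvd_prime_iff_eq hqp Nat.prime_two).mp this
            rw [this, Nat.odd_iff] at hqodd; omega
          · obtain ⟨i, _, hi⟩ := hqp.prime.exists_mem_finset_dvd hprod
            exact ⟨i, (Nat.prime_dvd_prime_iff_eq hqp (hp i)).mp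
              (hqp.dvd_of_dvd_pow hi)⟩
        obtain ⟨i, hi⟩ := this
        exact h i (hi ▸ myAP_of_div hap hqdvd hdvd (odd_div hkodd hqdvd) hd0)
  rw [hset]
  -- finite setup
  set α := {δ : ZMod (2*d) → ZMod 2 // myAP d d δ} with hα
  haveI : Fintype α := Fintype.ofFinite α
  set B : Fin m → Finset α := fun i => Finset.univ.filter (fun x => myAP d (d / p i) x.1) with hB
  -- cardinality of t-fold intersections
  have hcard : ∀ t : Finset (Fin m), ((t.inf B).card : ℤ) = 2 ^ (d / ∏ i ∈ t, p i) := by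
    intro t
    have hmemt : ∀ x : α, x ∈ t.inf B ↔ myAP d (d / ∏ i ∈ t, p i) x.1 := by
      intro x
      rw [mem_inf_finset]
      rw [← hchar t x.1]
      simp only [hB, Finset.mem_filter, Finset.mem_univ, true_and]
      exact ⟨fun h => ⟨x.2, h⟩, fun h => h.2⟩
    have : (t.inf B).card = Nat.card {δ : ZMod (2*d) → ZMod 2 // myAP d (d / ∏ i ∈ t, p i) δ} := by
      rw [← Fintype.card_coe, Nat.card_eq_fintype_card.symm]
      refine Nat.card_congr ⟨fun x => ⟨x.1.1, (hmemt x.1).mp x.2⟩,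
        fun δ => ⟨⟨δ.1, ((hchar t δ.1).mpr δ.2).1⟩, (hmemt _).mpr δ.2⟩, ?_, ?_⟩
      · intro x; ext; rfl
      · intro δ; rfl
    rw [this, myAP_card hd0 (Nat.div_dvd_of_dvd (hPdvd t))]
    push_cast
    ring
  -- Nat.card A₀ = card of intersection of complements
  have hA0card : (Nat.card {δ : ZMod (2*d) → ZMod 2 | myAP d d δ ∧ ∀ i, ¬ myAP d (d / p i) δ} : ℤ)
      = ((Finset.univ.inf fun i => (B i)ᶜ).card : ℤ) := by
    congr 1
    rw [← Fintype.card_coe, ← Nat.card_eq_fintype_card]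
    refine Nat.card_congr ⟨fun δ => ⟨⟨δ.1, δ.2.1⟩, ?_⟩, fun x => ⟨x.1.1, x.1.2, ?_⟩, ?_, ?_⟩
    · rw [mem_inf_finset]
      intro i _
      simp only [hB, Finset.mem_compl, Finset.mem_filter, Finset.mem_univ, true_and]
      exact δ.2.2 i
    · intro i
      have := (mem_inf_finset).mp x.2 i (Finset.mem_univ i)
      simpa [hB] using this
    · intro δ; rfl
    · intro x; ext; rfl
  rw [hA0card]
  rw [Finset.inclusion_exclusion_card_inf_compl Finset.univ B]
  -- split off the empty set
  rw [← Finset.sum_filter_add_sum_filter_not Finset.univ.powerset Finset.Nonempty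
    (fun t => (-1:ℤ)^t.card * (t.inf B).card)]
  have hemp : Finset.univ.powerset.filter (fun t : Finset (Fin m) => ¬ t.Nonempty) = {∅} := by
    ext t
    simp [Finset.not_nonempty_iff_eq_empty]
  rw [hemp, Finset.sum_singleton]
  simp only [Finset.card_empty, pow_zero, one_mul, Finset.inf_empty, Finset.top_eq_univ]
  rw [add_comm]
  congr 1
  · have := hcard ∅
    simpa using this
  · refine Finset.sum_congr rfl fun t _ => ?_
    rw [hcard t]
end

section
/- With d = 2^{k₀} p₁^{k₁} ⋯ p_m^{k_m} (p_i distinct odd primes) and A₀ as above, the cyclic group Z/(2d) acts freely on A₀ by shifts, and hence the number of orbits equals (1/(2d)) · (2^d + Σ_{j=1}^{m} Σ_{1 ≤ i₁ < ⋯ < i_j ≤ m} (−1)^j · 2^{d/(p_{i₁} ⋯ p_{i_j})}). In particular 2d divides 2^d + Σ_{j=1}^{m} Σ_{1 ≤ i₁ < ⋯ < i_j ≤ m} (−1)^j · 2^{d/(p_{i₁} ⋯ p_{i_j})}. -/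
namespace Stmt6Aux

variable {N : ℕ}

/-- `t` is a generalized (anti)period multiple: shifting by `t*e` adds `t*c`. -/
def Tm (δ : ZMod N → ZMod 2) (e : ℕ) (c : ZMod 2) (t : ℕ) : Prop :=
  ∀ j : ZMod N, δ (j + ((t * e : ℕ) : ZMod N)) = δ j + (t : ZMod 2) * c

theorem Tm_add {δ : ZMod N → ZMod 2} {e : ℕ} {c : ZMod 2} {a b : ℕ}
    (ha : Tm δ e c a) (hb : Tm δ e c b) : Tm δ e c (a + b) := by
  intro j
  have h1 : (((a + b) * e : ℕ) : ZMod N) = ((a * e : ℕ) : ZMod N) + ((b * e : ℕ) : ZMod N) := by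
    push_cast; ring
  rw [h1, ← add_assoc, hb (j + ((a*e : ℕ) : ZMod N)), ha j]
  push_cast; ring

theorem Tm_sub {δ : ZMod N → ZMod 2} {e : ℕ} {c : ZMod 2} {a b : ℕ} (hle : b ≤ a)
    (ha : Tm δ e c a) (hb : Tm δ e c b) : Tm δ e c (a - b) := by
  intro j
  have key := hb (j + (((a - b) * e : ℕ) : ZMod N))
  have h1 : (((a - b) * e : ℕ) : ZMod N) + ((b * e : ℕ) : ZMod N) = ((a * e : ℕ) : ZMod N) := by
    rw [← Nat.cast_add]
    congr 1
    rw [← Nat.add_mul, Nat.sub_add_cancel hle]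
  rw [add_assoc, h1, ha j] at key
  have h2 : ((a - b : ℕ) : ZMod 2) = (a : ZMod 2) - (b : ZMod 2) := by
    rw [Nat.cast_sub hle]
  have : δ (j + (((a - b) * e : ℕ) : ZMod N)) + (b : ZMod 2) * c
      = (δ j + ((a - b : ℕ) : ZMod 2) * c) + (b : ZMod 2) * c := by
    rw [h2]; linear_combination -key
  exact add_right_cancel this

theorem Tm_zero {δ : ZMod N → ZMod 2} {e : ℕ} {c : ZMod 2} : Tm δ e c 0 := by
  intro j; simp

theorem Tm_mul {δ : ZMod N → ZMod 2} {e : ℕ} {c : ZMod 2} {a : ℕ} (k : ℕ)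
    (ha : Tm δ e c a) : Tm δ e c (k * a) := by
  induction k with
  | zero => simpa using (Tm_zero : Tm δ e c 0)
  | succ n ih =>
      have := Tm_add ih ha
      simpa [Nat.succ_mul] using this

theorem Tm_mod {δ : ZMod N → ZMod 2} {e : ℕ} {c : ZMod 2} {a b : ℕ}
    (ha : Tm δ e c a) (hb : Tm δ e c b) : Tm δ e c (b % a) := by
  have h1 : b % a = b - (b / a) * a := by
    have h := Nat.mod_add_div b a
    have := eq_tsub_of_add_eq h
    rw [this, Nat.mul_comm]
  rw [h1]
  exact Tm_sub (Nat.div_mul_le_self b a) hb (Tm_mul (b / a) ha)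

theorem Tm_gcd {δ : ZMod N → ZMod 2} {e : ℕ} {c : ZMod 2} :
    ∀ a b : ℕ, Tm δ e c a → Tm δ e c b → Tm δ e c (Nat.gcd a b) := by
  intro a
  induction a using Nat.strong_induction_on with
  | _ a ih =>
    intro b ha hb
    match a, ha with
    | 0, ha => simpa [Nat.gcd_zero_left] using hb
    | (a + 1), ha =>
        rw [Nat.gcd_rec]
        exact ih (b % (a + 1)) (Nat.mod_lt _ (Nat.succ_pos a)) (a + 1)
          (Tm_mod ha hb) ha

theorem Tm_one_iff {δ : ZMod N → ZMod 2} {e : ℕ} {c : ZMod 2} :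
    Tm δ e c 1 ↔ ∀ j : ZMod N, δ (j + (e : ZMod N)) = δ j + c := by
  unfold Tm
  simp

end Stmt6Aux

theorem cast_odd {q : ℕ} (h : Odd q) : (q : ZMod 2) = 1 := by
  obtain ⟨s, rfl⟩ := h
  push_cast
  have h2 : (2 : ZMod 2) = 0 := by decide
  rw [h2]
  ring

theorem flip2 : ∀ {a b : ZMod 2}, a = b + 1 ↔ b = a + 1 := by decide

open Stmt6Aux in
theorem anti_inter {d P Q : ℕ} (hP : Odd P) (hQ : Odd Q)
    (hco : Nat.Coprime P Q) (hdvd : P * Q ∣ d) (δ : ZMod (2*d) → ZMod 2) :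
    ((∀ j, δ (j + ((d/P : ℕ) : ZMod (2*d))) = δ j + 1) ∧
     (∀ j, δ (j + ((d/Q : ℕ) : ZMod (2*d))) = δ j + 1)) ↔
    (∀ j, δ (j + ((d/(P*Q) : ℕ) : ZMod (2*d))) = δ j + 1) := by
  have P0 : 0 < P := hP.pos
  have Q0 : 0 < Q := hQ.pos
  set e := d / (P*Q) with he
  have heq : P * Q * e = d := by
    rw [he, Nat.mul_div_cancel' hdvd]
  have hdP : d / P = Q * e := by
    rw [← heq, mul_assoc, Nat.mul_div_cancel_left _ P0]
  have hdQ : d / Q = P * e := by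
    rw [← heq, show P * Q * e = Q * (P * e) from by ring, Nat.mul_div_cancel_left _ Q0]
  constructor
  · rintro ⟨h1, h2⟩
    have ha : Tm δ e 1 Q := by
      intro j
      rw [show ((Q * e : ℕ) : ZMod (2*d)) = ((d / P : ℕ) : ZMod (2*d)) from by rw [hdP]]
      rw [h1 j, cast_odd hQ, mul_one]
    have hb : Tm δ e 1 P := by
      intro j
      rw [show ((P * e : ℕ) : ZMod (2*d)) = ((d / Q : ℕ) : ZMod (2*d)) from by rw [hdQ]]
      rw [h2 j, cast_odd hP, mul_one]
    have hg := Tm_gcd P Q hb ha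
    rw [Nat.Coprime] at hco
    rw [hco] at hg
    exact Tm_one_iff.1 hg
  · intro h
    have h1 : Tm δ e 1 1 := Tm_one_iff.2 h
    constructor
    · intro j
      have := Tm_mul Q h1 j
      rw [mul_one] at this
      rw [hdP, this, cast_odd hQ, mul_one]
    · intro j
      have := Tm_mul P h1 j
      rw [mul_one] at this
      rw [hdQ, this, cast_odd hP, mul_one]



theorem cast_mod_of_dvd {e n : ℕ} (h : e ∣ n) (x : ℕ) :
    ((x % n : ℕ) : ZMod e) = (x : ZMod e) := by
  conv_rhs => rw [← Nat.mod_add_div x n]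
  push_cast
  obtain ⟨t, rfl⟩ := h
  push_cast
  ring_nf
  simp [ZMod.natCast_self]

theorem key_formula {N e : ℕ} (he0 : 0 < e) (δ : ZMod N → ZMod 2)
    (hδ : ∀ j, δ (j + (e : ZMod N)) = δ j + 1) :
    ∀ n : ℕ, δ (n : ZMod N) = δ ((n % e : ℕ) : ZMod N) + ((n / e : ℕ) : ZMod 2) := by
  intro n
  induction n using Nat.strong_induction_on with
  | _ n ih =>
    by_cases h : n < e
    · rw [Nat.mod_eq_of_lt h, Nat.div_eq_of_lt h]; simp
    · push_neg at h
      have h1 : n = (n - e) + e := (Nat.sub_add_cancel h).symm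
      have h2 : δ (n : ZMod N) = δ ((n - e : ℕ) : ZMod N) + 1 := by
        conv_lhs => rw [h1]
        push_cast
        rw [hδ]
      rw [h2, ih (n - e) (by omega)]
      rw [← Nat.mod_eq_sub_mod h, Nat.div_eq_sub_div he0 h]
      push_cast
      ring

theorem card_anti {d e : ℕ} [NeZero (2*d)] (hd : 0 < d) (he : e ∣ d) (he0 : 0 < e) :
    (Finset.univ.filter
      (fun δ : ZMod (2*d) → ZMod 2 => ∀ j, δ (j + (e : ZMod (2*d))) = δ j + 1)).card
      = 2 ^ e := by
  haveI : NeZero e := ⟨by omega⟩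
  have hed : e ≤ d := Nat.le_of_dvd hd he
  have he2d : e ∣ 2*d := he.mul_left 2
  have heval : (e : ZMod (2*d)).val = e := ZMod.val_cast_of_lt (by omega)
  -- the bijection maps
  rw [show (2:ℕ) ^ e = Fintype.card (ZMod e → ZMod 2) by
    simp [Fintype.card_fun, ZMod.card]]
  rw [← Finset.card_univ]
  apply Finset.card_bij'
    (i := fun δ _ => fun x : ZMod e => δ ((x.val : ZMod (2*d))))
    (j := fun f _ => fun jj : ZMod (2*d) => f ((jj.val : ZMod e)) + ((jj.val / e : ℕ) : ZMod 2))
  · intro δ hδ; exact Finset.mem_univ _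
  · -- j maps into the filter
    intro f _
    simp only [Finset.mem_filter, Finset.mem_univ, true_and]
    intro jj
    have hval : (jj + (e : ZMod (2*d))).val = (jj.val + e) % (2*d) := by
      rw [ZMod.val_add, heval]
    rw [hval]
    set n := jj.val with hn
    have hnlt : n < 2*d := ZMod.val_lt jj
    -- the ZMod e component
    have hc1 : (((n + e) % (2*d) : ℕ) : ZMod e) = ((n : ℕ) : ZMod e) := by
      rw [cast_mod_of_dvd he2d]
      push_cast
      simp [ZMod.natCast_self]
    rw [hc1]
    -- the division component
    have hc2 : ((((n + e) % (2*d)) / e : ℕ) : ZMod 2) = ((n / e : ℕ) : ZMod 2) + 1 := by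
      rcases lt_or_ge (n + e) (2*d) with hlt | hge
      · rw [Nat.mod_eq_of_lt hlt, Nat.add_div_right _ he0]
        push_cast; ring
      · have hmod : (n + e) % (2*d) = n + e - 2*d := by
          rw [Nat.mod_eq_sub_mod hge, Nat.mod_eq_of_lt (by omega)]
        obtain ⟨t, ht⟩ := he
        have ht2 : 2*d = e * (2*t) := by rw [ht]; ring
        have hle2 : e * (2*t) ≤ n + e := by omega
        have hdiv : (n + e - 2*d) / e = (n + e) / e - 2*t := by
          rw [ht2]
          exact Nat.sub_mul_div _ _ _
        have hdivle : 2*t ≤ (n + e) / e :=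
          (Nat.le_div_iff_mul_le he0).2
            (by rw [show 2*t*e = e*(2*t) from by ring]; exact hle2)
        rw [hmod, hdiv, Nat.cast_sub hdivle, Nat.add_div_right _ he0]
        push_cast
        ring_nf
        simp
        right
        decide
    rw [hc2]
    ring
  · -- j ∘ i = id
    intro δ hδ
    simp only [Finset.mem_filter, Finset.mem_univ, true_and] at hδ
    funext jj
    have hval : ((jj.val : ℕ) : ZMod e).val = jj.val % e := ZMod.val_natCast _ _
    simp only [hval]
    have := (key_formula he0 δ hδ jj.val).symm
    rw [this, ZMod.natCast_rightInverse jj]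
  · -- i ∘ j = id
    intro f _
    funext x
    have hxe : x.val < e := ZMod.val_lt x
    have hv : ((x.val : ℕ) : ZMod (2*d)).val = x.val := ZMod.val_cast_of_lt (by omega)
    simp only [hv]
    rw [Nat.div_eq_of_lt hxe]
    simp [ZMod.natCast_rightInverse x]



theorem odd_dvd {a b : ℕ} (hb : Odd b) (h : a ∣ b) : Odd a := by
  rcases Nat.even_or_odd a with he | ho
  · exfalso
    rw [← Nat.not_even_iff_odd] at hb
    obtain ⟨c, hc⟩ := he.two_dvd.trans h
    exact hb ⟨c, by omega⟩
  · exact ho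

/-- The cyclic group `ℤ/2d` acts freely by shifts on the set `A₀`, and the number of
shift-orbits equals `(1/2d)(2^d + Σ_{∅ ≠ S} (−1)^{|S|} 2^{d/∏_{i∈S} p_i})`; in
particular `2d` divides that integer. -/
theorem stmt6 (m k₀ : ℕ) (p : Fin m → ℕ) (k : Fin m → ℕ)
    (hp : ∀ i, (p i).Prime) (hodd : ∀ i, Odd (p i)) (hinj : Function.Injective p)
    (hk : ∀ i, 1 ≤ k i)
    (d : ℕ) (hd : d = 2 ^ k₀ * ∏ i, p i ^ k i)
    (A₀ : Set (ZMod (2 * d) → ZMod 2))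
    (hA₀ : A₀ = {δ | (∀ j : ZMod (2 * d), δ j = δ (j + (d : ZMod (2 * d))) + 1) ∧
      ∀ kk : ℕ, 2 ≤ kk → kk ∣ d →
        ∃ j : ZMod (2 * d), δ j ≠ δ (j + ((d / kk : ℕ) : ZMod (2 * d))) + 1})
    (r : A₀ → A₀ → Prop)
    (hr : ∀ δ₁ δ₂ : A₀, r δ₁ δ₂ ↔ ∃ mm : ZMod (2 * d), ∀ j, δ₁.1 (j + mm) = δ₂.1 j) :
    (∀ δ ∈ A₀, ∀ mm : ZMod (2 * d), (∀ j, δ (j + mm) = δ j) → mm = 0) ∧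
    ((Nat.card (Quot r) : ℤ) * (2 * d) =
      2 ^ d + ∑ S ∈ Finset.univ.powerset.filter Finset.Nonempty,
        (-1 : ℤ) ^ S.card * 2 ^ (d / ∏ i ∈ S, p i)) ∧
    ((2 * d : ℤ) ∣
      2 ^ d + ∑ S ∈ Finset.univ.powerset.filter Finset.Nonempty,
        (-1 : ℤ) ^ S.card * 2 ^ (d / ∏ i ∈ S, p i)) := by
  have hd0 : 0 < d := by
    rw [hd]
    exact Nat.mul_pos (Nat.pow_pos two_pos)
      (Finset.prod_pos fun i _ => pow_pos (hp i).pos _)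
  haveI : NeZero (2 * d) := ⟨by omega⟩
  have hpd : ∀ i : Fin m, p i ∣ d := by
    intro i
    rw [hd]
    exact Dvd.dvd.mul_left
      ((dvd_pow_self (p i) (Nat.one_le_iff_ne_zero.mp (hk i))).trans
        (Finset.dvd_prod_of_mem (fun i => p i ^ k i) (Finset.mem_univ i))) _

  have Tm10 : ∀ (δ : ZMod (2 * d) → ZMod 2) (n : ℕ),
      Stmt6Aux.Tm δ 1 0 n ↔ ∀ j, δ (j + (n : ZMod (2 * d))) = δ j := by
    intro δ n
    unfold Stmt6Aux.Tm
    simp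
  -- freeness
  have free : ∀ δ ∈ A₀, ∀ mm : ZMod (2 * d), (∀ j, δ (j + mm) = δ j) → mm = 0 := by
    intro δ hδ mm hmm
    rw [hA₀] at hδ
    obtain ⟨h1, h2⟩ := hδ
    by_contra hne
    have hself : ∀ j, δ (j + (d : ZMod (2 * d))) = δ j + 1 := fun j => flip2.1 (h1 j)
    have hcast : ((mm.val : ℕ) : ZMod (2 * d)) = mm := ZMod.natCast_rightInverse mm
    set t := mm.val with htdef
    have ht0 : 0 < t := Nat.pos_of_ne_zero (fun h => hne (by rw [← hcast, h, Nat.cast_zero]))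
    have htlt : t < 2 * d := ZMod.val_lt mm
    have hTt : Stmt6Aux.Tm δ 1 0 t := (Tm10 δ t).2 (by intro j; rw [hcast]; exact hmm j)
    have hT2d : Stmt6Aux.Tm δ 1 0 (2 * d) := (Tm10 δ (2 * d)).2 (by
      intro j; rw [ZMod.natCast_self, add_zero])
    set g := Nat.gcd t (2 * d) with hgdef
    have hTg := Stmt6Aux.Tm_gcd t (2 * d) hTt hT2d
    have hg2d : g ∣ 2 * d := Nat.gcd_dvd_right _ _
    have hg0 : 0 < g := Nat.gcd_pos_of_pos_left _ ht0
    have hglet : g ≤ t := Nat.gcd_le_left _ ht0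
    have hgnd : ¬ g ∣ d := by
      intro hgd
      obtain ⟨s, hs⟩ := hgd
      have hTd : Stmt6Aux.Tm δ 1 0 d := by
        have h' := Stmt6Aux.Tm_mul s hTg
        rwa [show s * g = d from by rw [hs, mul_comm]] at h'
      have heq := (Tm10 δ d).1 hTd 0
      rw [hself 0] at heq
      exact one_ne_zero (by linear_combination heq)
    set q := 2 * d / g with hqdefn
    have hgq : g * q = 2 * d := Nat.mul_div_cancel' hg2d
    have hqodd : Odd q := by
      rcases Nat.even_or_odd q with heq | ho
      · exfalso
        obtain ⟨q', hq'⟩ := heq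
        have h2' : g * q' * 2 = 2 * d := by rw [← hgq, hq']; ring
        exact hgnd ⟨q', by omega⟩
      · exact ho
    have hq1 : q ≠ 1 := fun h => by rw [h, mul_one] at hgq; omega
    have hq0 : 0 < q := by
      rcases Nat.eq_zero_or_pos q with h | h
      · rw [h, mul_zero] at hgq; omega
      · exact h
    have hq2 : 2 ≤ q := by omega
    have hqd : q ∣ d := (hqodd.coprime_two_right).dvd_of_dvd_mul_left ⟨g, by rw [← hgq]; ring⟩
    set e := d / q with hedefn
    have hed : q * e = d := Nat.mul_div_cancel' hqd
    have hge : g = 2 * e := by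
      have h' : g * q = (2 * e) * q := by rw [hgq, ← hed]; ring
      exact Nat.eq_of_mul_eq_mul_right hq0 h'
    have hTm2 : Stmt6Aux.Tm δ e 1 2 := by
      intro j
      have h' := (Tm10 δ g).1 hTg j
      rw [hge] at h'
      rw [show ((2 : ℕ) : ZMod 2) * 1 = 0 from by decide, add_zero]
      exact h'
    have hTmq : Stmt6Aux.Tm δ e 1 q := by
      intro j
      rw [show ((q * e : ℕ) : ZMod (2 * d)) = ((d : ℕ) : ZMod (2 * d)) from by rw [hed]]
      rw [hself j, cast_odd hqodd, mul_one]
    have hT1 := Stmt6Aux.Tm_gcd 2 q hTm2 hTmq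
    rw [show Nat.gcd 2 q = 1 from hqodd.coprime_two_left] at hT1
    obtain ⟨j, hj⟩ := h2 q hq2 hqd
    exact hj (flip2.1 (Stmt6Aux.Tm_one_iff.1 hT1 j))

  classical
  -- counting setup
  set c : ℕ → Finset (ZMod (2 * d) → ZMod 2) := fun P =>
    Finset.univ.filter (fun δ => ∀ j, δ (j + ((d / P : ℕ) : ZMod (2 * d))) = δ j + 1)
    with hcdef
  have hprod_odd : ∀ S : Finset (Fin m), Odd (∏ i ∈ S, p i) :=
    fun S => Finset.prod_induction p Odd (fun a b ha hb => ha.mul hb) odd_one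
      (fun i _ => hodd i)
  have hprod_dvd : ∀ S : Finset (Fin m), (∏ i ∈ S, p i) ∣ d := by
    intro S
    rw [hd]
    refine Dvd.dvd.mul_left ?_ _
    exact (Finset.prod_dvd_prod_of_subset _ _ _ (Finset.subset_univ S)).trans
      (Finset.prod_dvd_prod_of_dvd _ _
        (fun i _ => dvd_pow_self (p i) (Nat.one_le_iff_ne_zero.mp (hk i))))
  have hprod_pos : ∀ S : Finset (Fin m), 0 < ∏ i ∈ S, p i := fun S => (hprod_odd S).pos
  have hc_card : ∀ P : ℕ, P ∣ d → 0 < P → (c P).card = 2 ^ (d / P) := by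
    intro P hPd hP0
    exact card_anti hd0 (Nat.div_dvd_of_dvd hPd) (Nat.div_pos (Nat.le_of_dvd hd0 hPd) hP0)
  have hc_pair : ∀ (P Q : ℕ), Odd P → Odd Q → Nat.Coprime P Q → P * Q ∣ d →
      c P ⊓ c Q = c (P * Q) := by
    intro P Q h1 h2 h3 h4
    ext δ
    simp only [hcdef, Finset.inf_eq_inter, Finset.mem_inter, Finset.mem_filter,
      Finset.mem_univ, true_and]
    exact anti_inter h1 h2 h3 h4 δ
  have hc_inter : ∀ S : Finset (Fin m),
      c 1 ⊓ S.inf (fun i => c (p i)) = c (∏ i ∈ S, p i) := by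
    intro S
    induction S using Finset.induction_on with
    | empty => simp
    | @insert a S ha ih =>
      rw [Finset.inf_insert, Finset.prod_insert ha]
      have hco : Nat.Coprime (p a) (∏ i ∈ S, p i) :=
        Nat.Coprime.prod_right (fun i hi => (Nat.coprime_primes (hp a) (hp i)).2
          (fun h => ha (by rw [hinj h]; exact hi)))
      rw [inf_left_comm, ih]
      exact hc_pair (p a) _ (hodd a) (hprod_odd S) hco
        (by rw [← Finset.prod_insert ha]; exact hprod_dvd _)
  -- A₀ as a Finset
  have hA₀eq : A₀ = (((Finset.univ.inf fun i => (c (p i))ᶜ) ⊓ c 1 : Finset _) :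
      Set (ZMod (2 * d) → ZMod 2)) := by
    ext δ
    rw [hA₀]
    simp only [Set.mem_setOf_eq, Finset.coe_inter, Set.mem_inter_iff, Finset.mem_coe,
      Finset.inf_eq_inter, Finset.mem_inter, Finset.mem_inf, Finset.mem_compl, hcdef,
      Finset.mem_filter, Finset.mem_univ, true_and]
    constructor
    · rintro ⟨h1, h2⟩
      constructor
      · intro i _ hcon
        obtain ⟨j, hj⟩ := h2 (p i) (hp i).two_le (hpd i)
        exact hj (flip2.1 (hcon j))
      · simp only [Nat.div_one]
        exact fun j => flip2.1 (h1 j)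
    · rintro ⟨hnc, h1⟩
      simp only [Nat.div_one] at h1
      refine ⟨fun j => flip2.1 (h1 j), ?_⟩
      intro kk hkk2 hkkd
      by_contra hno
      push_neg at hno
      have h0 : Stmt6Aux.Tm δ (d / kk) 1 1 :=
        Stmt6Aux.Tm_one_iff.2 (fun j => flip2.1 (hno j))
      rcases Nat.even_or_odd kk with hkke | hkko
      · have h3 := Stmt6Aux.Tm_mul kk h0
        rw [mul_one] at h3
        have h4 := h3 0
        rw [Nat.mul_div_cancel' hkkd] at h4
        have h5 : ((kk : ℕ) : ZMod 2) = 0 :=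
          (ZMod.natCast_eq_zero_iff kk 2).2 hkke.two_dvd
        rw [h5, zero_mul, add_zero, h1 0] at h4
        exact one_ne_zero (by linear_combination h4)
      · set q := kk.minFac with hqdef
        have hqprime : q.Prime := Nat.minFac_prime (by omega)
        have hqkk : q ∣ kk := Nat.minFac_dvd kk
        have hqodd : Odd q := odd_dvd hkko hqkk
        have hqd' : q ∣ d := hqkk.trans hkkd
        have hqprod : q ∣ ∏ i, p i ^ k i := by
          have hco : Nat.Coprime q (2 ^ k₀) :=
            Nat.Coprime.pow_right _ hqodd.coprime_two_right
          exact hco.dvd_of_dvd_mul_left (by rw [← hd]; exact hqd')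
        obtain ⟨i, _, hi⟩ := (hqprime.prime.dvd_finset_prod_iff _).1 hqprod
        have hqpi : q = p i :=
          (Nat.prime_dvd_prime_iff_eq hqprime (hp i)).1 (hqprime.dvd_of_dvd_pow hi)
        refine hnc i trivial ?_
        intro j
        have hs := Stmt6Aux.Tm_mul (kk / q) h0
        rw [mul_one] at hs
        have heq2 : (kk / q) * (d / kk) = d / q := by
          obtain ⟨s, hs'⟩ := hqkk
          obtain ⟨e', he'⟩ := hkkd
          have hq0 : 0 < q := hqprime.pos
          have e1 : kk / q = s := by rw [hs', Nat.mul_div_cancel_left _ hq0]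
          have e2 : d / kk = e' := by rw [he', Nat.mul_div_cancel_left _ (by omega : 0 < kk)]
          have e3 : d / q = s * e' := by
            rw [he', hs', show q * s * e' = q * (s * e') from by ring,
              Nat.mul_div_cancel_left _ hq0]
          rw [e1, e2, e3]
        have hodd2 : Odd (kk / q) := odd_dvd hkko (Nat.div_dvd_of_dvd hqkk)
        have h6 := hs j
        rw [heq2] at h6
        rw [← hqpi, h6, cast_odd hodd2, mul_one]
  -- inclusion-exclusion
  have hsum_ind : ∀ s t : Finset (ZMod (2 * d) → ZMod 2),
      ∑ a ∈ s, (if a ∈ t then (1 : ℤ) else 0) = ((s ⊓ t).card : ℤ) := by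
    intro s t
    rw [Finset.sum_ite_mem]
    simp [Finset.inf_eq_inter]
  have hIE := Finset.inclusion_exclusion_sum_inf_compl
    (Finset.univ : Finset (Fin m)) (fun i => c (p i))
    (fun δ => if δ ∈ c 1 then (1 : ℤ) else 0)
  rw [hsum_ind] at hIE
  have hRHS : ∀ t ∈ (Finset.univ : Finset (Fin m)).powerset,
      ((-1 : ℤ) ^ t.card • ∑ a ∈ t.inf fun i => c (p i), (if a ∈ c 1 then (1:ℤ) else 0))
        = (-1 : ℤ) ^ t.card * 2 ^ (d / ∏ i ∈ t, p i) := by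
    intro t _
    rw [hsum_ind, inf_comm (t.inf fun i => c (p i)) (c 1), hc_inter t,
      hc_card _ (hprod_dvd t) (hprod_pos t), zsmul_eq_mul]
    push_cast
    ring
  rw [Finset.sum_congr rfl hRHS] at hIE
  -- split off the empty set
  have hsplit : ∑ t ∈ (Finset.univ : Finset (Fin m)).powerset,
        (-1 : ℤ) ^ t.card * 2 ^ (d / ∏ i ∈ t, p i)
      = 2 ^ d + ∑ S ∈ Finset.univ.powerset.filter Finset.Nonempty,
        (-1 : ℤ) ^ S.card * 2 ^ (d / ∏ i ∈ S, p i) := by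
    rw [← Finset.sum_filter_add_sum_filter_not
      (Finset.univ : Finset (Fin m)).powerset Finset.Nonempty
      (fun S => (-1 : ℤ) ^ S.card * 2 ^ (d / ∏ i ∈ S, p i))]
    rw [show (Finset.univ : Finset (Fin m)).powerset.filter (fun S => ¬ S.Nonempty) = {∅}
      from by ext S; simp [Finset.not_nonempty_iff_eq_empty]]
    rw [Finset.sum_singleton]
    simp only [Finset.card_empty, pow_zero, one_mul, Finset.prod_empty, Nat.div_one]
    ring
  -- A₀ cardinality
  have hcardA : (Nat.card ↥A₀ : ℤ)
      = 2 ^ d + ∑ S ∈ Finset.univ.powerset.filter Finset.Nonempty,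
        (-1 : ℤ) ^ S.card * 2 ^ (d / ∏ i ∈ S, p i) := by
    rw [show Nat.card ↥A₀ = ((Finset.univ.inf fun i => (c (p i))ᶜ) ⊓ c 1).card from by
      rw [Nat.card_coe_set_eq, hA₀eq, Set.ncard_coe_finset]]
    rw [hIE, hsplit]
  -- shifts stay in A₀
  have hshift : ∀ (δ : ZMod (2 * d) → ZMod 2), δ ∈ A₀ → ∀ mm : ZMod (2 * d),
      (fun j => δ (j + mm)) ∈ A₀ := by
    rw [hA₀]
    rintro δ ⟨h1, h2⟩ mm
    refine ⟨fun j => ?_, fun kk h2k hdvd => ?_⟩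
    · have := h1 (j + mm)
      simpa [add_right_comm] using this
    · obtain ⟨j, hj⟩ := h2 kk h2k hdvd
      refine ⟨j - mm, fun hcon => hj ?_⟩
      simp only at hcon
      rw [show j - mm + mm = j from by ring,
        show j - mm + ((d / kk : ℕ) : ZMod (2 * d)) + mm
          = j + ((d / kk : ℕ) : ZMod (2 * d)) from by ring] at hcon
      exact hcon
  -- r is an equivalence relation
  have req : Equivalence r := by
    constructor
    · intro a; rw [hr]; exact ⟨0, fun j => by rw [add_zero]⟩
    · intro a b h
      rw [hr] at h ⊢
      obtain ⟨mm, h⟩ := h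
      refine ⟨-mm, fun j => ?_⟩
      have := h (j + -mm)
      rw [show j + -mm + mm = j from by ring] at this
      exact this.symm
    · intro a b cc hab hbc
      rw [hr] at hab hbc ⊢
      obtain ⟨m1, h1'⟩ := hab
      obtain ⟨m2, h2'⟩ := hbc
      refine ⟨m2 + m1, fun j => ?_⟩
      have := h1' (j + m2)
      rw [show j + m2 + m1 = j + (m2 + m1) from by ring] at this
      rw [this, h2' j]
  -- each orbit has 2d elements
  have hfiber : ∀ cq : Quot r, Nat.card {a : ↥A₀ // Quot.mk r a = cq} = 2 * d := by
    intro cq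
    induction cq using Quot.ind with
    | _ δ₀ =>
      have hbij : Function.Bijective (fun mm : ZMod (2 * d) =>
          (⟨⟨fun j => δ₀.1 (j + mm), hshift δ₀.1 δ₀.2 mm⟩, by
            apply Quot.sound
            rw [hr]
            refine ⟨-mm, fun j => ?_⟩
            simp only
            rw [show j + -mm + mm = j from by ring]⟩ :
            {a : ↥A₀ // Quot.mk r a = Quot.mk r δ₀})) := by
        constructor
        · intro m1 m2 h
          have h' : ∀ j, δ₀.1 (j + m1) = δ₀.1 (j + m2) := by
            intro j
            exact congrFun (congrArg (fun x => x.1.1) h) j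
          have h'' : ∀ j, δ₀.1 (j + (m1 - m2)) = δ₀.1 j := by
            intro j
            have := h' (j - m2)
            rw [show j - m2 + m1 = j + (m1 - m2) from by ring,
              show j - m2 + m2 = j from by ring] at this
            exact this
          have hz := free δ₀.1 δ₀.2 (m1 - m2) h''
          exact sub_eq_zero.mp hz
        · rintro ⟨⟨δ, hδA⟩, hq⟩
          have hrel : r ⟨δ, hδA⟩ δ₀ := (req.eqvGen_iff).1 (Quot.eq.1 hq)
          rw [hr] at hrel
          obtain ⟨mm, hmm⟩ := hrel
          refine ⟨-mm, ?_⟩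
          apply Subtype.ext
          apply Subtype.ext
          funext j
          simp only
          have := hmm (j + -mm)
          rw [show j + -mm + mm = j from by ring] at this
          exact this.symm
      calc Nat.card {a : ↥A₀ // Quot.mk r a = Quot.mk r δ₀}
          = Nat.card (ZMod (2 * d)) := (Nat.card_congr (Equiv.ofBijective _ hbij)).symm
        _ = 2 * d := Nat.card_zmod _
  -- orbit counting
  have horbit : Nat.card ↥A₀ = Nat.card (Quot r) * (2 * d) := by
    haveI : Fintype ↥A₀ := Fintype.ofFinite _
    haveI : Fintype (Quot r) := Fintype.ofFinite _
    calc Nat.card ↥A₀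
        = Nat.card ((cq : Quot r) × {a : ↥A₀ // Quot.mk r a = cq}) :=
          (Nat.card_congr (Equiv.sigmaFiberEquiv (Quot.mk r))).symm
      _ = ∑ cq : Quot r, Nat.card {a : ↥A₀ // Quot.mk r a = cq} := by
          rw [Nat.card_eq_fintype_card, Fintype.card_sigma]
          exact Finset.sum_congr rfl fun cq _ => (Nat.card_eq_fintype_card).symm
      _ = ∑ _cq : Quot r, 2 * d := Finset.sum_congr rfl fun cq _ => hfiber cq
      _ = Nat.card (Quot r) * (2 * d) := by
          rw [Finset.sum_const, Finset.card_univ, Nat.card_eq_fintype_card, smul_eq_mul]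
  have key : (Nat.card (Quot r) : ℤ) * (2 * d) =
      2 ^ d + ∑ S ∈ Finset.univ.powerset.filter Finset.Nonempty,
        (-1 : ℤ) ^ S.card * 2 ^ (d / ∏ i ∈ S, p i) := by
    rw [← hcardA, horbit]
    push_cast
    ring
  exact ⟨free, key, ⟨(Nat.card (Quot r) : ℤ), by linarith [key]⟩⟩
end

section
/- Let d ≥ 1 and for each positive divisor e of d let B_e = {δ : Z/(2d) → Z/2 : δ(j) = δ(j + e) + 1 for all j}. Then |B_e| = 2^e, and for odd primes p, q dividing d one has B_{d/p} ∩ B_{d/q} = B_{d/(pq)} (more generally, B_{d/(p_{i₁} ⋯ p_{i_j})} = ∩_{l=1}^{j} B_{d/p_{i_l}} for distinct odd primes p_{i_l} dividing d). -/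
private lemma z2 : ∀ a : ZMod 2, a + 1 + 1 = a := by decide

private lemma zadd : ∀ a : ZMod 2, a + a = 0 := by decide

private lemma oddCast {n : ℕ} (h : Odd n) : (n : ZMod 2) = 1 := by
  rw [← ZMod.natCast_mod, Nat.odd_iff.mp h]; rfl

private lemma oddDvd {a b : ℕ} (h : a ∣ b) (hb : Odd b) : Odd a := by
  rcases h with ⟨c, rfl⟩
  rcases Nat.even_or_odd a with he | ho
  · exact absurd (he.mul_right c) (Nat.not_even_iff_odd.mpr hb)
  · exact ho

private lemma lemA {N : ℕ} (δ : ZMod N → ZMod 2) (e : ℕ)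
    (h : ∀ j, δ j = δ (j + (e : ZMod N)) + 1) :
    ∀ (j : ZMod N) (k : ℤ), δ (j + k * (e : ZMod N)) = δ j + (k : ZMod 2) := by
  have h' : ∀ j : ZMod N, δ (j + (e : ZMod N)) = δ j + 1 := by
    intro j
    rw [h j, add_assoc, show ((1:ZMod 2)+1) = 0 by decide, add_zero]
  intro j k
  induction k using Int.induction_on with
  | zero => simp
  | succ n ih =>
      push_cast
      have : j + ((n : ZMod N) + 1) * (e : ZMod N) = (j + (n : ℤ) * (e : ZMod N)) + (e : ZMod N) := by
        push_cast; ring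
      rw [this, h', ih]; push_cast; ring
  | pred n ih =>
      push_cast
      push_cast at ih
      have key : (j + (-(n : ZMod N) - 1) * (e : ZMod N)) + (e : ZMod N) = j + (-(n : ℤ)) * (e : ZMod N) := by
        push_cast; ring
      have h2 := h' (j + (-(n : ZMod N) - 1) * (e : ZMod N))
      rw [key] at h2
      push_cast at h2
      rw [ih] at h2
      have : δ (j + (-(n : ZMod N) - 1) * (e : ZMod N)) = δ j + (-(n : ZMod 2)) - 1 := by
        rw [← sub_eq_iff_eq_add] at h2
        exact h2.symm
      rw [this]; ring

private lemma lemNat {N : ℕ} (δ : ZMod N → ZMod 2) (E : ℕ)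
    (h : ∀ j, δ j = δ (j + (E : ZMod N)) + 1) (j : ZMod N) (c : ℕ) :
    δ (j + ((c * E : ℕ) : ZMod N)) = δ j + (c : ZMod 2) := by
  have := lemA δ E h j (c : ℤ)
  push_cast at this ⊢
  exact this

private lemma lemOdd {N : ℕ} (δ : ZMod N → ZMod 2) (E c : ℕ) (hc : Odd c)
    (h : ∀ j, δ j = δ (j + (E : ZMod N)) + 1) :
    ∀ j, δ j = δ (j + ((c * E : ℕ) : ZMod N)) + 1 := by
  intro j
  rw [lemNat δ E h j c, oddCast hc]
  exact (z2 (δ j)).symm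

private lemma lemGcd {N : ℕ} (δ : ZMod N → ZMod 2) (a b : ℕ) (ha : 0 < a)
    (hoa : Odd (a / Nat.gcd a b)) (hob : Odd (b / Nat.gcd a b))
    (hAa : ∀ j, δ j = δ (j + (a : ZMod N)) + 1)
    (hAb : ∀ j, δ j = δ (j + (b : ZMod N)) + 1) :
    ∀ j, δ j = δ (j + (Nat.gcd a b : ZMod N)) + 1 := by
  set g := Nat.gcd a b with hg
  have hg0 : 0 < g := Nat.gcd_pos_of_pos_left b ha
  set x := Nat.gcdA a b with hx
  set y := Nat.gcdB a b with hy
  have hbez : (g : ℤ) = a * x + b * y := Nat.gcd_eq_gcd_ab a b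
  have hga : ((a/g : ℕ) : ℤ) * g = a := by exact_mod_cast Nat.div_mul_cancel (Nat.gcd_dvd_left a b)
  have hgb : ((b/g : ℕ) : ℤ) * g = b := by exact_mod_cast Nat.div_mul_cancel (Nat.gcd_dvd_right a b)
  have h2 : (1 : ℤ) = ((a/g:ℕ):ℤ)*x + ((b/g:ℕ):ℤ)*y := by
    apply mul_left_cancel₀ (by exact_mod_cast hg0.ne' : (g:ℤ) ≠ 0)
    rw [mul_one]
    calc (g:ℤ) = a*x + b*y := hbez
    _ = (((a/g:ℕ):ℤ)*g)*x + (((b/g:ℕ):ℤ)*g)*y := by rw [hga, hgb]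
    _ = g * (((a/g:ℕ):ℤ)*x + ((b/g:ℕ):ℤ)*y) := by ring
  have h3 := congrArg (Int.cast : ℤ → ZMod 2) h2
  simp only [Int.cast_add, Int.cast_mul, Int.cast_natCast, Int.cast_one] at h3
  rw [oddCast hoa, oddCast hob, one_mul, one_mul] at h3
  have hxy : ((x : ℤ) : ZMod 2) + ((y : ℤ) : ZMod 2) = 1 := h3.symm
  intro j
  have harg : j + ((g:ℕ) : ZMod N) = (j + (x : ℤ) * (a : ZMod N)) + (y : ℤ) * (b : ZMod N) := by
    have := congrArg (Int.cast : ℤ → ZMod N) hbez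
    push_cast at this
    rw [this]; ring
  rw [harg, lemA δ b hAb _ y, lemA δ a hAa j x]
  have h20 : (2 : ZMod 2) = 0 := by decide
  linear_combination (-1 : ZMod 2) * hxy - h20

private lemma prodDvd {d n : ℕ} (p : Fin n → ℕ) (inj : Function.Injective p)
    (pr : ∀ l, (p l).Prime) (dv : ∀ l, p l ∣ d) : (∏ l, p l) ∣ d := by
  classical
  have himg : ∏ l, p l = ∏ x ∈ Finset.univ.image p, x := by
    rw [Finset.prod_image (fun x _ y _ h => inj h)]
  rw [himg]
  refine Finset.prod_primes_dvd d ?_ ?_ <;> intro x hx <;>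
    obtain ⟨l, -, rfl⟩ := Finset.mem_image.mp hx
  · exact (pr l).prime
  · exact dv l

private lemma cardB (d e : ℕ) (hd : 0 < d) (he : 0 < e) (hed : e ∣ d) :
    Nat.card {δ : ZMod (2*d) → ZMod 2 | ∀ j, δ j = δ (j + (e : ZMod (2*d))) + 1} = 2 ^ e := by
  haveI : NeZero (2*d) := ⟨by omega⟩
  have hede : e ≤ d := Nat.le_of_dvd hd hed
  have he2 : e < 2*d := by omega
  set S := {δ : ZMod (2*d) → ZMod 2 | ∀ j, δ j = δ (j + (e : ZMod (2*d))) + 1} with hS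
  set F : S → (Fin e → ZMod 2) := fun δ i => δ.1 ((i : ℕ) : ZMod (2*d)) with hF
  have hval : ∀ j : ZMod (2*d), (j + (e : ZMod (2*d))).val = (j.val + e) % (2*d) := by
    intro j
    rw [ZMod.val_add, ZMod.val_cast_of_lt he2]
  have decomp : ∀ δ : ZMod (2*d) → ZMod 2, (∀ j, δ j = δ (j + (e : ZMod (2*d))) + 1) →
      ∀ j : ZMod (2*d), δ j = δ (((j.val % e : ℕ) : ZMod (2*d))) + ((j.val / e : ℕ) : ZMod 2) := by
    intro δ hδ j
    have h2 := lemNat δ e hδ ((j.val % e : ℕ) : ZMod (2*d)) (j.val / e)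
    have harg : ((j.val % e : ℕ) : ZMod (2*d)) + ((j.val / e * e : ℕ) : ZMod (2*d)) = j := by
      rw [← Nat.cast_add, Nat.mod_add_div']
      exact ZMod.natCast_rightInverse j
    rw [harg] at h2
    exact h2
  have hinj : Function.Injective F := by
    intro δ δ' hEq
    apply Subtype.ext
    funext j
    have h1 := decomp δ.1 δ.2 j
    have h2 := decomp δ'.1 δ'.2 j
    rw [h1, h2]
    have := congrFun hEq ⟨j.val % e, Nat.mod_lt _ he⟩
    simp only [hF] at this
    rw [this]
  have hsurj : Function.Surjective F := by
    intro f
    set δ : ZMod (2*d) → ZMod 2 :=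
      fun j => f ⟨j.val % e, Nat.mod_lt _ he⟩ + ((j.val / e : ℕ) : ZMod 2) with hδ
    have compute : ∀ x : ZMod (2*d), δ x = f ⟨x.val % e, Nat.mod_lt _ he⟩ + ((x.val / e : ℕ) : ZMod 2) :=
      fun x => rfl
    have hmem : ∀ j, δ j = δ (j + (e : ZMod (2*d))) + 1 := by
      intro j
      have hjlt : j.val < 2*d := ZMod.val_lt j
      have hstep : δ (j + (e : ZMod (2*d))) = δ j + 1 := by
        rw [compute, compute j]
        rcases lt_or_ge (j.val + e) (2*d) with hc | hc
        · have hv : (j + (e : ZMod (2*d))).val = j.val + e := by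
            rw [hval]; exact Nat.mod_eq_of_lt hc
          simp only [hv, Nat.add_mod_right, Nat.add_div_right _ he]
          push_cast; ring
        · obtain ⟨M, hMeq, hMeven⟩ : ∃ M, 2*d = e*M ∧ Even M := by
            refine ⟨2*(d/e), ?_, even_two_mul _⟩
            conv_lhs => rw [← Nat.mul_div_cancel' hed]
            ring
          have hle : e*M ≤ j.val + e := by omega
          have hv : (j + (e : ZMod (2*d))).val = j.val + e - e*M := by
            rw [hval, Nat.mod_eq_sub_mod hc, Nat.mod_eq_of_lt (by omega)]
            omega
          have hMle : M ≤ j.val / e + 1 := by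
            rw [← Nat.add_div_right _ he]
            exact (Nat.le_div_iff_mul_le he).mpr (by rw [mul_comm]; omega)
          have hmod : (j.val + e - e*M) % e = j.val % e := by
            rw [Nat.sub_mul_mod hle, Nat.add_mod_right]
          have hdivq : (j.val + e - e*M) / e = j.val/e + 1 - M := by
            rw [Nat.sub_mul_div _ _ _, Nat.add_div_right _ he]
          have hM0 : (M : ZMod 2) = 0 := by
            obtain ⟨k, hk⟩ := hMeven
            rw [hk]; push_cast
            exact zadd _
          simp only [hv, hmod, hdivq, Nat.cast_sub hMle, hM0, sub_zero]
          push_cast; ring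
      rw [hstep]
      exact (z2 (δ j)).symm
    refine ⟨⟨δ, hmem⟩, ?_⟩
    funext i
    simp only [hF]
    have hival : ((i : ℕ) : ZMod (2*d)).val = (i : ℕ) :=
      ZMod.val_cast_of_lt (lt_of_lt_of_le i.isLt (le_of_lt he2))
    rw [compute]
    simp only [hival, Nat.mod_eq_of_lt i.isLt, Nat.div_eq_of_lt i.isLt]
    simp
  have hcard := Nat.card_congr (Equiv.ofBijective F ⟨hinj, hsurj⟩)
  rw [hcard]
  simp [Nat.card_eq_fintype_card]

/-- For a positive divisor `e` of `d`, the set `B e` of `e`-antiperiodic maps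
`δ : ℤ/2d → ℤ/2` has cardinality `2^e`, and for distinct odd primes `p₁,…,p_j`
dividing `d` one has `B (d/(p₁⋯p_j)) = ⋂ B (d/p_l)`. -/
theorem stmt7 (d : ℕ) (hd : 1 ≤ d)
    (B : ℕ → Set (ZMod (2 * d) → ZMod 2))
    (hB : ∀ e : ℕ, B e = {δ | ∀ j : ZMod (2 * d), δ j = δ (j + (e : ZMod (2 * d))) + 1}) :
    (∀ e : ℕ, 0 < e → e ∣ d → Nat.card (B e) = 2 ^ e) ∧
    (∀ (jn : ℕ), 0 < jn → ∀ p : Fin jn → ℕ,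
      Function.Injective p → (∀ l, (p l).Prime) → (∀ l, Odd (p l)) → (∀ l, p l ∣ d) →
      B (d / ∏ l, p l) = ⋂ l, B (d / p l)) := by
  have hd0 : 0 < d := hd
  constructor
  · intro e he hed
    rw [hB e]
    exact cardB d e hd0 he hed
  · intro jn hjn p inj pr odd dv
    obtain ⟨n, rfl⟩ : ∃ n, jn = n + 1 := ⟨jn - 1, by omega⟩
    have hBmem : ∀ (e : ℕ) (δ : ZMod (2*d) → ZMod 2),
        δ ∈ B e ↔ ∀ j, δ j = δ (j + (e : ZMod (2*d))) + 1 := by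
      intro e δ; rw [hB e]; exact Iff.rfl
    ext δ
    simp only [Set.mem_iInter, hBmem]
    constructor
    · -- forward: B (d / ∏) ⊆ each B (d / p l)
      intro h l
      have hNd : (∏ l, p l) ∣ d := prodDvd p inj pr dv
      have hNodd : Odd (∏ l, p l) :=
        Finset.prod_induction p Odd (fun a b ha hb => ha.mul hb) odd_one (fun i _ => odd i)
      have hplN : p l ∣ ∏ l, p l := Finset.dvd_prod_of_mem p (Finset.mem_univ l)
      set N := ∏ l, p l with hN
      set D := d / N with hDdef
      set c := N / p l with hcdef
      have hdND : D * N = d := Nat.div_mul_cancel hNd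
      have hNc : c * p l = N := Nat.div_mul_cancel hplN
      have hdecomp : d = (c * D) * p l := by rw [← hdND, ← hNc]; ring
      have hdp : d / p l = c * D := by rw [hdecomp, Nat.mul_div_cancel _ (pr l).pos]
      have hcodd : Odd c := oddDvd ⟨p l, hNc.symm⟩ hNodd
      rw [hdp]
      exact lemOdd δ D c hcodd h
    · -- backward, by induction on n
      intro h
      clear hjn
      induction n with
      | zero =>
          simpa [Fin.prod_univ_one] using h 0
      | succ n ih =>
          set q : Fin (n+1) → ℕ := p ∘ Fin.castSucc with hq
          have hqinj : Function.Injective q := inj.comp (Fin.castSucc_injective _)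
          have ihq := ih q hqinj (fun l => pr _) (fun l => odd _) (fun l => dv _) (fun l => h _)
          set m := p (Fin.last (n+1)) with hm
          set N' := ∏ l, q l with hN'
          have hsplit : (∏ l, p l) = N' * m := by
            rw [Fin.prod_univ_castSucc]; rfl
          have hNall : (∏ l, p l) ∣ d := prodDvd p inj pr dv
          have hdvd' : N' * m ∣ d := hsplit ▸ hNall
          have hcop : Nat.Coprime m N' := by
            apply Nat.Coprime.prod_right
            intro i _
            exact (Nat.coprime_primes (pr _) (pr _)).mpr
              (fun hEq => absurd (inj hEq) (Fin.castSucc_lt_last i).ne')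
          have hm0 : 0 < m := (pr _).pos
          have hN'0 : 0 < N' := Finset.prod_pos fun i _ => (pr _).pos
          set D := d / (N' * m) with hDdef
          have hD : D * (N' * m) = d := Nat.div_mul_cancel hdvd'
          have hD0 : 0 < D := Nat.div_pos (Nat.le_of_dvd hd0 hdvd') (by positivity)
          have ha : d / N' = m * D := by
            have hh : d = (m*D)*N' := by rw [← hD]; ring
            rw [hh, Nat.mul_div_cancel _ hN'0]
          have hb : d / m = N' * D := by
            have hh : d = (N'*D)*m := by rw [← hD]; ring
            rw [hh, Nat.mul_div_cancel _ hm0]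
          have hgcd : Nat.gcd (d / N') (d / m) = D := by
            rw [ha, hb, Nat.gcd_mul_right, hcop.gcd_eq_one, one_mul]
          have hoa : Odd ((d / N') / Nat.gcd (d / N') (d / m)) := by
            rw [hgcd, ha, Nat.mul_div_cancel _ hD0]
            exact odd _
          have hob : Odd ((d / m) / Nat.gcd (d / N') (d / m)) := by
            rw [hgcd, hb, Nat.mul_div_cancel _ hD0]
            exact Finset.prod_induction q Odd (fun a b x y => x.mul y) odd_one (fun i _ => odd _)
          have hapos : 0 < d / N' := Nat.div_pos (Nat.le_of_dvd hd0 (dvd_trans ⟨m, rfl⟩ hdvd')) hN'0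
          have hres := lemGcd δ (d / N') (d / m) hapos hoa hob ihq (h (Fin.last _))
          rw [hgcd] at hres
          rw [hsplit]
          exact hres
end
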